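/- Fix K and L, and let C1 and C2 be two refinement configurations for hops 0,...,K and iterations 0,...,L such that C2^l_k ⊆ C1^l_k for every l ≤ L and every k ∈ {0,...,K}. Then C1 is at least as powerful as C2 at every iteration l ≤ L: for all finite simple graphs G1, G2 and vertices v ∈ G1, u ∈ G2, if v ≈^{C1}_l u then v ≈^{C2}_l u. -/
import Mathlib


/-!
STATEMENT 5: Monotonicity of the general K-hop color refinement in the refinement
configuration: if C2^l_k ⊆ C1^l_k for all l ≤ L and k ∈ {0,…,K}, then C1 is at least
as powerful as C2 at every iteration l ≤ L.
-/

namespace KHopStmt5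

/-- k-th hop neighbors under the shortest-path-distance kernel: vertices at graph
distance exactly `k` from `v` (so `Qspd G v 0 = {v}`). -/
noncomputable def Qspd {V : Type*} [Fintype V] (G : SimpleGraph V) (v : V) (k : ℕ) :
    Finset V := by
  classical
  exact Finset.univ.filter fun u => G.Reachable v u ∧ G.dist v u = k

/-- The general K-hop shortest-path-distance color refinement determined by a
refinement configuration `C` (where `C l k ⊆ {0,…,l}` is the set of earlier iterations
whose colors are aggregated over the k-th hop when passing from iteration `l` to
iteration `l+1`): `v ≈^C_0 u` always, and `v ≈^C_{l+1} u` iff for every `k ≤ K` and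
every `s ∈ C l k` there is a bijection of the k-th hop neighborhoods matching
`≈^C_s`-equivalent vertices. (The guard `s ≤ l` is automatic for genuine refinement
configurations and makes the recursion well-founded.) -/
def CREquiv {V1 V2 : Type*} [Fintype V1] [Fintype V2] (K : ℕ) (C : ℕ → ℕ → Finset ℕ)
    (G1 : SimpleGraph V1) (G2 : SimpleGraph V2) : ℕ → V1 → V2 → Prop
  | 0, _, _ => True
  | (l + 1), v, u =>
      ∀ k ≤ K, ∀ s ∈ C l k, s ≤ l →
        ∃ σ : {w // w ∈ Qspd G1 v k} ≃ {w // w ∈ Qspd G2 u k},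
          ∀ w : {w // w ∈ Qspd G1 v k}, CREquiv K C G1 G2 s w.1 (σ w).1
  termination_by l => l
  decreasing_by omega

/-- If `C2^l_k ⊆ C1^l_k` for every `l ≤ L` and `k ∈ {0,…,K}`, then
`C1` is at least as powerful as `C2` at every iteration `l ≤ L`: for all finite simple
graphs and vertices, `v ≈^{C1}_l u` implies `v ≈^{C2}_l u`. -/
theorem refinement_config_monotone (K L : ℕ) (C1 C2 : ℕ → ℕ → Finset ℕ)
    (hC1 : ∀ l ≤ L, ∀ k ≤ K, ∀ s ∈ C1 l k, s ≤ l)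
    (hC2 : ∀ l ≤ L, ∀ k ≤ K, ∀ s ∈ C2 l k, s ≤ l)
    (hsub : ∀ l ≤ L, ∀ k ≤ K, C2 l k ⊆ C1 l k) :
    ∀ l ≤ L, ∀ (V1 V2 : Type) [Fintype V1] [Fintype V2]
      (G1 : SimpleGraph V1) (G2 : SimpleGraph V2) (v : V1) (u : V2),
      CREquiv K C1 G1 G2 l v u → CREquiv K C2 G1 G2 l v u := by
  intro l
  induction l using Nat.strong_induction_on with
  | _ l ih =>
    intro hlL V1 V2 _ _ G1 G2 v u h
    cases l with
    | zero => rw [CREquiv]; trivial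
    | succ l =>
      rw [CREquiv] at h ⊢
      intro k hk s hs hsl
      obtain ⟨σ, hσ⟩ := h k hk s (hsub l (by omega) k hk hs) hsl
      exact ⟨σ, fun w => ih s (by omega) (by omega) V1 V2 G1 G2 _ _ (hσ w)⟩

end KHopStmt5
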